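/- There exist absolute constants c > 0 and C > 0 with the following property. Let G be an abelian group, A, Z ⊆ G finite nonempty sets, k and m positive integers, and K ≥ 1 a real number. Suppose that |m([k]·A) + Z| ≤ K·|Z|, that m ≤ dim_k(A)/2, that m ≤ c·log|Z|, and that log|Z| ≤ dim_k(A). Then k·dim_k(A) ≤ C·K^{1/m}·log|Z|. -/

import Mathlib

/-!
Take a `k`-dissociated `Λ ⊆ A` of size `d = dim_k A`, put `L = log |Z|`, and choose
`n = t m ∈ (L/2, L]`. Splitting `Λ` into `n` blocks of size `s = ⌊d/n⌋` and choosing one element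
from each block with a multiplicity in `[1, k]` gives `(s k)^n` distinct elements of
`n([k]·A) = t (m([k]·A))`, while Plünnecke–Ruzsa bounds the size of this set by
`K^t |Z| ≤ K^t 4^n`. Taking `n`-th roots, `s k ≤ 4 K^{1/m}`, and `d k ≤ 2 n s k ≤ 8 K^{1/m} L`.
-/

open Finset Pointwise

universe u

/-- A finset `Λ` in an abelian group is `k`-dissociated if every integer relation
`∑ ε_λ • λ = 0` with `|ε_λ| ≤ k` forces all `ε_λ = 0`. -/
def IsKDissociated {G : Type*} [AddCommGroup G] (k : ℕ) (Λ : Finset G) : Prop :=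
  ∀ ε : G → ℤ, (∀ x ∈ Λ, |ε x| ≤ (k : ℤ)) → (∑ x ∈ Λ, ε x • x) = 0 → ∀ x ∈ Λ, ε x = 0

/-- `addDim k A` is the maximal size of a `k`-dissociated subset of `A`. -/
noncomputable def addDim {G : Type*} [AddCommGroup G] (k : ℕ) (A : Finset G) : ℕ :=
  sSup {n : ℕ | ∃ Λ : Finset G, Λ ⊆ A ∧ Λ.card = n ∧ IsKDissociated k Λ}

/-- `nFold A n` is the `n`-fold sumset `A + A + ⋯ + A` (`n` summands). -/
def nFold {G : Type*} [AddCommGroup G] [DecidableEq G] (A : Finset G) : ℕ → Finset G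
  | 0 => {0}
  | n + 1 => nFold A n + A

/-- `dilSet k A = {j • a : j ∈ {1,…,k}, a ∈ A}`, where `j • a` is the `j`-fold sum of `a`. -/
def dilSet {G : Type*} [AddCommGroup G] [DecidableEq G] (k : ℕ) (A : Finset G) : Finset G :=
  ((Finset.Icc 1 k) ×ˢ A).image (fun p => p.1 • p.2)

namespace IsKDissociated

variable {G : Type*} [AddCommGroup G] {k : ℕ}

lemma mono {Λ Λ' : Finset G} (h : IsKDissociated k Λ) (hΛ' : Λ' ⊆ Λ) :
    IsKDissociated k Λ' := by
  classical
  intro ε hε hsum x hx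
  have key := h (fun y => if y ∈ Λ' then ε y else 0) ?_ ?_ x (hΛ' hx)
  · simpa [hx] using key
  · intro y _
    split_ifs with hy
    exacts [hε y hy, by simp]
  · simp only [ite_smul, zero_smul, sum_ite_mem, inter_eq_right.mpr hΛ', hsum]

lemma eq_zero_of_sum_smul_eq_zero {α : Type*} [Fintype α] {ι : α ↪ G}
    (h : IsKDissociated k (univ.map ι)) {c : α → ℤ} (hc : ∀ a, |c a| ≤ k)
    (hsum : ∑ a, c a • ι a = 0) : c = 0 := by
  classical
  funext a
  have key := h (Function.extend ι c 0) ?_ ?_ (ι a) (mem_map_of_mem _ (mem_univ a))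
  · simpa [ι.injective.extend_apply] using key
  · simpa [ι.injective.extend_apply] using hc
  · simpa [ι.injective.extend_apply] using hsum

end IsKDissociated

section Sumsets

variable {G : Type*} [AddCommGroup G]

lemma exists_isKDissociated_card_eq_addDim (k : ℕ) (A : Finset G) :
    ∃ Λ ⊆ A, #Λ = addDim k A ∧ IsKDissociated k Λ :=
  Nat.sSup_mem (s := {n | ∃ Λ ⊆ A, #Λ = n ∧ IsKDissociated k Λ})
    ⟨0, ∅, empty_subset _, card_empty, fun _ _ _ x hx => absurd hx (notMem_empty x)⟩
    ⟨#A, fun _ ⟨_, hΛA, hΛ, _⟩ => hΛ ▸ card_le_card hΛA⟩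

variable [DecidableEq G]

lemma nFold_eq_nsmul (A : Finset G) : ∀ n : ℕ, nFold A n = n • A
  | 0 => (zero_smul ℕ A).symm
  | n + 1 => by rw [nFold, nFold_eq_nsmul A n, succ_nsmul]

lemma nFold_mono {A B : Finset G} (h : A ⊆ B) (n : ℕ) : nFold A n ⊆ nFold B n := by
  simpa only [nFold_eq_nsmul] using nsmul_subset_nsmul_left h

lemma sum_mem_nFold {S : Finset G} : ∀ {n : ℕ} {g : Fin n → G}, (∀ i, g i ∈ S) →
    ∑ i, g i ∈ nFold S n
  | 0, _, _ => by simp [nFold]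
  | n + 1, g, hg => by
      rw [Fin.sum_univ_castSucc, nFold]
      exact add_mem_add (sum_mem_nFold fun i => hg _) (hg _)

lemma dilSet_mono {k : ℕ} {A B : Finset G} (h : A ⊆ B) : dilSet k A ⊆ dilSet k B :=
  image_subset_image (product_subset_product Subset.rfl h)

/-- The sums `∑ i, jᵢ • ι (i, rᵢ)` with `jᵢ ∈ [1, k]` are distinct by `k`-dissociativity. -/
lemma pow_le_card_nFold_dilSet_map {n s k : ℕ} (ι : Fin n × Fin s ↪ G)
    (h : IsKDissociated k (univ.map ι)) :
    (s * k) ^ n ≤ #(nFold (dilSet k (univ.map ι)) n) := by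
  let φ : (Fin n → Fin s × Fin k) → G := fun f => ∑ i, ((f i).2 + 1 : ℕ) • ι (i, (f i).1)
  let coeff : (Fin n → Fin s × Fin k) → Fin n × Fin s → ℕ := fun f p =>
    if (f p.1).1 = p.2 then (f p.1).2 + 1 else 0
  have hφ : ∀ f, φ f = ∑ p, (coeff f p : ℤ) • ι p := by
    intro f
    simp only [φ, coeff, Nat.cast_ite, Nat.cast_zero, ite_smul, zero_smul, natCast_zsmul,
      Fintype.sum_prod_type, sum_ite_eq, mem_univ, if_true]
  have hcoeff_le : ∀ f p, coeff f p ≤ k := by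
    intro f p
    simp only [coeff]
    split_ifs
    exacts [(f p.1).2.isLt, Nat.zero_le k]
  have hinj : Function.Injective φ := by
    intro f f' hff
    have hcoeff : (fun p => (coeff f p : ℤ) - coeff f' p) = 0 :=
      h.eq_zero_of_sum_smul_eq_zero
        (fun p => abs_sub_le_of_nonneg_of_le (Nat.cast_nonneg _) (by exact_mod_cast hcoeff_le f p)
          (Nat.cast_nonneg _) (by exact_mod_cast hcoeff_le f' p))
        (by simp only [sub_smul, sum_sub_distrib, ← hφ, hff, sub_self])
    funext i
    have := congr_fun hcoeff (i, (f i).1)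
    simp only [coeff, if_true, Pi.zero_apply, sub_eq_zero] at this
    split_ifs at this with hfst
    · exact Prod.ext hfst.symm (Fin.ext (by omega))
    · omega
  have hmem : ∀ f, φ f ∈ nFold (dilSet k (univ.map ι)) n := fun f =>
    sum_mem_nFold fun i => mem_image.mpr
      ⟨((f i).2 + 1, ι (i, (f i).1)), mem_product.mpr ⟨mem_Icc.mpr ⟨by omega, (f i).2.isLt⟩,
        mem_map_of_mem _ (mem_univ _)⟩, rfl⟩
  calc (s * k) ^ n = #(univ : Finset (Fin n → Fin s × Fin k)) := by simp
    _ ≤ #(nFold (dilSet k (univ.map ι)) n) :=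
        card_le_card_of_injOn φ (fun f _ => hmem f) hinj.injOn

lemma pow_le_card_nFold_dilSet {n s k : ℕ} {A Λ : Finset G} (hΛA : Λ ⊆ A)
    (hΛ : IsKDissociated k Λ) (hns : n * s ≤ #Λ) :
    (s * k) ^ n ≤ #(nFold (dilSet k A) n) := by
  obtain ⟨e⟩ := Function.Embedding.nonempty_of_card_le (α := Fin n × Fin s) (β := Λ)
    (by simpa using hns)
  let ι := e.trans (Function.Embedding.subtype _)
  have hι : univ.map ι ⊆ Λ := fun x hx => by
    obtain ⟨p, -, rfl⟩ := mem_map.mp hx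
    exact (e p).2
  exact (pow_le_card_nFold_dilSet_map ι (hΛ.mono hι)).trans
    (card_le_card (nFold_mono (dilSet_mono (hι.trans hΛA)) n))

lemma card_nsmul_le_of_card_add_le {B Z : Finset G} (hZ : Z.Nonempty) {K : ℝ}
    (hBZ : (#(B + Z) : ℝ) ≤ K * #Z) (t : ℕ) : (#(t • B) : ℝ) ≤ K ^ t * #Z := by
  have hZpos : (0 : ℝ) < #Z := by exact_mod_cast hZ.card_pos
  have hratio : (#(Z + B) : ℝ) / #Z ≤ K := by rwa [div_le_iff₀ hZpos, add_comm]
  calc (#(t • B) : ℝ) ≤ ((#(Z + B) : ℝ) / #Z) ^ t * #Z := by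
        have := NNRat.cast_le (K := ℝ) |>.mpr (pluennecke_ruzsa_inequality_nsmul_add hZ B t)
        push_cast at this
        exact this
    _ ≤ K ^ t * #Z := by gcongr

end Sumsets

lemma exists_nat_mul_le_lt_two_mul {L : ℝ} {m : ℕ} (hm : 1 ≤ m) (hL : 2 * m ≤ L) :
    ∃ t : ℕ, 0 < t ∧ ((t * m : ℕ) : ℝ) ≤ L ∧ L < 2 * (t * m : ℕ) := by
  have hm' : (0 : ℝ) < m := by exact_mod_cast hm
  refine ⟨⌊L / m⌋₊, Nat.floor_pos.mpr ?_, ?_, ?_⟩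
  · rw [le_div_iff₀ hm']
    linarith
  · push_cast
    exact (le_div_iff₀ hm').mp (Nat.floor_le (div_nonneg (by linarith) hm'.le))
  · have := (div_lt_iff₀ hm').mp (Nat.lt_floor_add_one (L / m))
    push_cast
    nlinarith

lemma Nat.le_two_mul_mul_div {d n : ℕ} (hn : 0 < n) (hnd : n ≤ d) : d ≤ 2 * n * (d / n) := by
  have hs : 1 ≤ d / n := (Nat.one_le_div_iff hn).mpr hnd
  calc d ≤ d / n * n + n := (Nat.lt_div_mul_add hn).le
    _ ≤ 2 * n * (d / n) := by nlinarith

lemma le_four_pow_of_logb_lt {x : ℝ} (hx : 0 < x) {n : ℕ} (h : Real.logb 2 x < 2 * n) :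
    x ≤ 4 ^ n := by
  have := (Real.logb_lt_iff_lt_rpow one_lt_two hx).mp h
  rw [Real.rpow_mul zero_le_two, Real.rpow_two, Real.rpow_natCast] at this
  norm_num at this
  exact this.le

lemma le_mul_rpow_one_div_of_pow_le {x b K : ℝ} (hx : 0 ≤ x) (hb : 0 ≤ b) (hK : 0 ≤ K)
    {t m : ℕ} (ht : t ≠ 0) (hm : m ≠ 0) (h : x ^ (t * m) ≤ K ^ t * b ^ (t * m)) :
    x ≤ b * K ^ (1 / (m : ℝ)) := by
  have hroot : (K ^ (1 / (m : ℝ))) ^ (t * m) = K ^ t := by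
    rw [one_div, mul_comm t m, pow_mul, Real.rpow_inv_natCast_pow hK hm]
  rw [← pow_le_pow_iff_left₀ hx (by positivity) (mul_ne_zero ht hm), mul_pow, hroot,
    mul_comm (b ^ _)]
  exact h

theorem stmt4 :
    ∃ c C : ℝ, 0 < c ∧ 0 < C ∧
      ∀ (G : Type u) [AddCommGroup G] [DecidableEq G] (A Z : Finset G) (k m : ℕ) (K : ℝ),
        A.Nonempty → Z.Nonempty → 1 ≤ k → 1 ≤ m → 1 ≤ K →
        ((nFold (dilSet k A) m + Z).card : ℝ) ≤ K * Z.card →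
        (m : ℝ) ≤ (addDim k A : ℝ) / 2 →
        (m : ℝ) ≤ c * Real.logb 2 Z.card →
        Real.logb 2 Z.card ≤ (addDim k A : ℝ) →
        (k : ℝ) * (addDim k A : ℝ) ≤ C * K ^ (1 / (m : ℝ)) * Real.logb 2 Z.card := by
  refine ⟨1 / 2, 8, by norm_num, by norm_num, ?_⟩
  intro G _ _ A Z k m K _ hZ _ hm hK hcard _ hmL hLd
  obtain ⟨Λ, hΛA, hΛd, hΛ⟩ := exists_isKDissociated_card_eq_addDim k A
  set d := addDim k A
  set L := Real.logb 2 #Z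
  obtain ⟨t, ht, hnL, hLn⟩ := exists_nat_mul_le_lt_two_mul hm (by linarith : 2 * (m : ℝ) ≤ L)
  set n := t * m
  have hn : 0 < n := Nat.mul_pos ht hm
  have hnd : n ≤ d := by exact_mod_cast hnL.trans hLd
  set s := d / n
  have hZn : (#Z : ℝ) ≤ 4 ^ n := le_four_pow_of_logb_lt (by exact_mod_cast hZ.card_pos) hLn
  have hsk : ((s * k : ℕ) : ℝ) ≤ 4 * K ^ (1 / (m : ℝ)) := by
    refine le_mul_rpow_one_div_of_pow_le (by positivity) (by norm_num) (by linarith)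
      ht.ne' (by omega) ?_
    calc ((s * k : ℕ) : ℝ) ^ n ≤ #(nFold (dilSet k A) n) := by
          exact_mod_cast pow_le_card_nFold_dilSet hΛA hΛ (by rw [hΛd]; exact Nat.mul_div_le d n)
      _ = #(t • nFold (dilSet k A) m) := by rw [nFold_eq_nsmul, nFold_eq_nsmul, mul_nsmul']
      _ ≤ K ^ t * #Z := card_nsmul_le_of_card_add_le hZ hcard t
      _ ≤ K ^ t * 4 ^ n := by gcongr
  calc (k : ℝ) * d ≤ 2 * n * ((s * k : ℕ) : ℝ) := by
        have hds : (d : ℝ) ≤ 2 * n * s := by exact_mod_cast Nat.le_two_mul_mul_div hn hnd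
        push_cast
        nlinarith [mul_le_mul_of_nonneg_left hds (Nat.cast_nonneg (α := ℝ) k)]
    _ ≤ 2 * L * (4 * K ^ (1 / (m : ℝ))) := by
        have : 0 ≤ L := by linarith
        gcongr
    _ = 8 * K ^ (1 / (m : ℝ)) * L := by ring
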